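/- Let ψ be a pure 2n-qubit state with hypermatrix ψ̂ and vectorization |ψ⟩ ∈ ℂ^{4^n}. Then the n-tangle satisfies τ_n(ψ) = 4 |hdet(ψ̂)|². -/

import Mathlib

/-- The `k`-th bit (big-endian, `0`-based) of an index `j`, so that for `j < 2^n`,
`j = Σ_k (bit j k) · 2^{n-1-k}` (lexicographic order of bit strings). -/
def qbit (n : ℕ) (j : ℕ) (k : Fin n) : Fin 2 :=
  ⟨j / 2 ^ (n - 1 - (k : ℕ)) % 2, by omega⟩

/-- The vectorization `|ψ⟩ ∈ ℂ^{4^n}` of a `2n`-qubit hypermatrix, listing the entries in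
lexicographic order of the binary index `j = Σ_k i_k 2^{2n−k}`. -/
noncomputable def vecQ (n : ℕ) (ψ : (Fin (2 * n) → Fin 2) → ℂ) : Fin (4 ^ n) → ℂ :=
  fun j => ψ (qbit (2 * n) (j : ℕ))

/-- The second Pauli matrix `σ_y = [[0, −i], [i, 0]]`. -/
noncomputable def pauliY : Matrix (Fin 2) (Fin 2) ℂ :=
  !![0, -Complex.I; Complex.I, 0]

/-- The `2n`-fold Kronecker power `σ_y^{⊗2n}` as a `4^n × 4^n` matrix
(indices encoded lexicographically by their `2n` bits). -/
noncomputable def pauliYPow (n : ℕ) : Matrix (Fin (4 ^ n)) (Fin (4 ^ n)) ℂ :=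
  fun i j => ∏ k : Fin (2 * n), pauliY (qbit (2 * n) (i : ℕ) k) (qbit (2 * n) (j : ℕ) k)

/-- The combinatorial hyperdeterminant of an order-`N` side-2 hypermatrix:
`hdet H = Σ_{σ_2,...,σ_N ∈ S_2} (−1)^m H_{0σ_2(0)...σ_N(0)} H_{1σ_2(1)...σ_N(1)}`,
where `m` is the number of the permutations `σ_2,...,σ_N` that are transpositions. -/
noncomputable def hdetQ (N : ℕ) (hN : 0 < N) (H : (Fin N → Fin 2) → ℂ) : ℂ :=
  ∑ σ : Fin N → Equiv.Perm (Fin 2),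
    if σ ⟨0, hN⟩ = 1 then
      (∏ k, ((Equiv.Perm.sign (σ k) : ℤ) : ℂ)) *
        (H (fun k => σ k 0) * H (fun k => σ k 1))
    else 0

/-!
Index the basis of `ℂ^{4^n}` by bit strings `f : Fin (2n) → Fin 2`. Then `σ_y^{⊗2n}` sends the
basis vector of `f` to `(-i)^{2n} s(f)` times that of its complement `f̄`, where
`s(f) = ∏_k (-1)^{f_k}`, so `⟨ψ|σ_y^{⊗2n}|ψ*⟩` is a unimodular multiple of the conjugate of
`S = Σ_f s(f) ψ_f ψ_{f̄}`. Because the length `2n` is even, `s(f̄) = s(f)` and the terms of `f` and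
`f̄` in `S` coincide. A tuple of permutations `σ_k ∈ S_2` is the bit string `f_k = σ_k(0)`, with
`σ_k(1) = f̄_k` and sign `(-1)^{f_k}`; so `hdet` is the half of `S` indexed by the strings with
`f_1 = 0`, one from each complementary pair. Hence `S = 2 hdet`.
-/

open Complex ComplexConjugate Finset

lemma qbit_eq_finFunctionFinEquiv_symm (N : ℕ) (j : Fin (2 ^ N)) (k : Fin N) :
    qbit N j k = finFunctionFinEquiv.symm j k.rev := by
  ext
  simp only [qbit, finFunctionFinEquiv_symm_apply_val, Fin.val_rev]
  congr 3
  omega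

lemma sum_comp_qbit {M : Type*} [AddCommMonoid M] (N L : ℕ) (hL : L = 2 ^ N)
    (F : (Fin N → Fin 2) → M) :
    ∑ j : Fin L, F (qbit N j) = ∑ f, F f := by
  subst hL
  refine Fintype.sum_equiv
    (finFunctionFinEquiv.symm.trans (Equiv.arrowCongr Fin.revPerm (Equiv.refl _))) _ _
    fun j => congrArg F ?_
  funext k
  simp [qbit_eq_finFunctionFinEquiv_symm]

lemma bits_add_one_add_one {N : ℕ} (f : Fin N → Fin 2) : f + 1 + 1 = f := by
  funext k
  simp only [Pi.add_apply, Pi.one_apply]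
  generalize f k = x
  revert x
  decide

def bitSign {N : ℕ} (f : Fin N → Fin 2) : ℂ := ∏ k, (-1) ^ (f k : ℕ)

lemma conj_bitSign {N : ℕ} (f : Fin N → Fin 2) : conj (bitSign f) = bitSign f := by
  simp [bitSign]

lemma bitSign_add_one {N : ℕ} (hN : Even N) (f : Fin N → Fin 2) :
    bitSign (f + 1) = bitSign f := by
  have hsign_flip : ∀ x : Fin 2, (-1 : ℂ) ^ ((x + 1 : Fin 2) : ℕ) = -(-1) ^ (x : ℕ) := by
    intro x; fin_cases x <;> simp
  simp only [bitSign, Pi.add_apply, Pi.one_apply, hsign_flip, Finset.prod_neg, card_univ,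
    Fintype.card_fin, hN.neg_one_pow, one_mul]

lemma pauliY_apply (x y : Fin 2) :
    pauliY x y = if y = x + 1 then -I * (-1) ^ (x : ℕ) else 0 := by
  fin_cases x <;> fin_cases y <;> simp [pauliY]

lemma prod_pauliY {N : ℕ} (f g : Fin N → Fin 2) :
    ∏ k, pauliY (f k) (g k) = if g = f + 1 then (-I) ^ N * bitSign f else 0 := by
  simp only [pauliY_apply, Fintype.prod_ite_zero, funext_iff, Pi.add_apply, Pi.one_apply,
    Finset.prod_mul_distrib, prod_const, card_univ, Fintype.card_fin, bitSign]

/-- In `Fin N → Fin 2`, `f + 1` is the bitwise complement of `f`. -/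
def spinFlipPairing {N : ℕ} (H : (Fin N → Fin 2) → ℂ) : ℂ :=
  ∑ f, bitSign f * (H f * H (f + 1))

lemma dotProduct_conj_vecQ_pauliYPow (n : ℕ) (ψ : (Fin (2 * n) → Fin 2) → ℂ) :
    dotProduct (fun j => conj (vecQ n ψ j)) ((pauliYPow n).mulVec (fun j => conj (vecQ n ψ j)))
      = (-I) ^ (2 * n) * conj (spinFlipPairing ψ) := by
  have h4 : 4 ^ n = 2 ^ (2 * n) := by rw [pow_mul]; norm_num
  calc _
      = ∑ f, conj (ψ f) * ∑ g, (∏ k, pauliY (f k) (g k)) * conj (ψ g) := by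
        simp only [dotProduct, Matrix.mulVec, vecQ, pauliYPow]
        rw [← sum_comp_qbit (2 * n) (4 ^ n) h4]
        congr! 2 with i
        exact sum_comp_qbit (2 * n) (4 ^ n) h4
          (fun g => (∏ k, pauliY (qbit (2 * n) i k) (g k)) * conj (ψ g))
    _ = ∑ f, conj (ψ f) * ((-I) ^ (2 * n) * bitSign f * conj (ψ (f + 1))) := by
        simp only [prod_pauliY, ite_mul, zero_mul, sum_ite_eq', mem_univ, if_true]
    _ = (-I) ^ (2 * n) * conj (spinFlipPairing ψ) := by
        simp only [spinFlipPairing, map_sum, map_mul, conj_bitSign, mul_sum]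
        exact sum_congr rfl fun f _ => by ring

lemma perm_apply_zero_bijective : Function.Bijective fun σ : Equiv.Perm (Fin 2) => σ 0 := by
  decide

lemma hdetQ_eq_sum_bits (N : ℕ) (hN : 0 < N) (H : (Fin N → Fin 2) → ℂ) :
    hdetQ N hN H = ∑ f, if f ⟨0, hN⟩ = 0 then bitSign f * (H f * H (f + 1)) else 0 := by
  have hone : ∀ σ : Equiv.Perm (Fin 2), σ 1 = σ 0 + 1 := by decide
  have hsign : ∀ σ : Equiv.Perm (Fin 2), Equiv.Perm.sign σ = (-1) ^ (σ 0 : ℕ) := by decide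
  have hid : ∀ σ : Equiv.Perm (Fin 2), σ = 1 ↔ σ 0 = 0 := by decide
  refine Fintype.sum_bijective (fun σ k => σ k 0)
    (Function.Bijective.piMap fun _ => perm_apply_zero_bijective) _ _ fun σ => ?_
  simp only [hid, hsign, hone, bitSign, Units.val_pow_eq_pow_val, Units.val_neg, Units.val_one,
    Int.cast_pow, Int.cast_neg, Int.cast_one]
  rfl

lemma spinFlipPairing_eq_two_mul_hdetQ (N : ℕ) (hN : 0 < N) (hEven : Even N)
    (H : (Fin N → Fin 2) → ℂ) : spinFlipPairing H = 2 * hdetQ N hN H := by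
  have hpair : ∀ f : Fin N → Fin 2,
      bitSign (f + 1) * (H (f + 1) * H (f + 1 + 1)) = bitSign f * (H f * H (f + 1)) := by
    intro f
    rw [bitSign_add_one hEven, bits_add_one_add_one, mul_comm (H _)]
  have hflip : ∀ x : Fin 2, x + 1 = 0 ↔ ¬ x = 0 := by decide
  rw [hdetQ_eq_sum_bits, two_mul, spinFlipPairing, ← sum_filter_add_sum_filter_not univ
    (fun f => f ⟨0, hN⟩ = 0), sum_filter, sum_filter]
  congr 1
  exact Fintype.sum_equiv (Equiv.addRight 1) _ _ fun f => by simp [hflip, hpair]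

/-- For a pure `2n`-qubit state `ψ`, the `n`-tangle
`τ_n(ψ) = |⟨ψ| σ_y^{⊗2n} |ψ*⟩|²` satisfies `τ_n(ψ) = 4 |hdet(ψ̂)|²`. -/
theorem n_tangle_eq_four_hdet_sq (n : ℕ) (hn : 1 ≤ n)
    (ψ : (Fin (2 * n) → Fin 2) → ℂ) :
    ‖
        (dotProduct (fun j => (starRingEnd ℂ) (vecQ n ψ j))
          ((pauliYPow n).mulVec (fun j => (starRingEnd ℂ) (vecQ n ψ j))))‖ ^ 2 =
      4 * ‖hdetQ (2 * n) (by omega) ψ‖ ^ 2 := by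
  rw [dotProduct_conj_vecQ_pauliYPow,
    spinFlipPairing_eq_two_mul_hdetQ (2 * n) (by omega) (even_two_mul n), norm_mul, norm_pow, norm_neg, norm_I, one_pow, one_mul, Complex.norm_conj,
    norm_mul, Complex.norm_two]
  ring
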